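/- arXiv:2010.11863 — 3 statements merged into one kernel-verified Lean document; each statement's English description precedes it below -/
import Mathlib

section
/- Let f : 2^Ω → ℝ≥0 be monotone and submodular with multilinear extension F. For any x ∈ [0,1]^Ω and any direction y ∈ ℝ^Ω with y ≥ 0, the univariate function ξ ↦ F(x + ξ·y) is concave on the interval where x + ξ·y remains in [0,1]^Ω. -/
/-!
Along the line `ξ ↦ x + ξ • y` every factor of the product defining `F` is affine in `ξ`, so the
second derivative of `ξ ↦ F (x + ξ • y)` is `∑_{i ≠ j} yᵢ yⱼ ∂ᵢ∂ⱼF` (there are no diagonal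
terms because `F` is multilinear). Grouping the sets `S` according to `S \ {i, j}` writes
`∂ᵢ∂ⱼF (z)` as a combination, with nonnegative coefficients when `z ∈ [0,1]^Ω`, of the second
differences `f (R ∪ {i, j}) - f (R ∪ {i}) - f (R ∪ {j}) + f R`, which are nonpositive by
submodularity.
-/

open Finset

noncomputable def mlext {Ω : Type*} [Fintype Ω] [DecidableEq Ω]
    (f : Finset Ω → ℝ) (x : Ω → ℝ) : ℝ :=
  ∑ S : Finset Ω, f S * ((∏ e ∈ S, x e) * ∏ e ∈ Sᶜ, (1 - x e))

section AffineProduct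

variable {ι : Type*} [DecidableEq ι] (a b : ι → ℝ)

theorem hasDerivAt_prod_affine (s : Finset ι) (ξ : ℝ) :
    HasDerivAt (fun ξ => ∏ k ∈ s, (a k + ξ * b k))
      (∑ i ∈ s, (∏ k ∈ s.erase i, (a k + ξ * b k)) * b i) ξ := by
  simpa using HasDerivAt.fun_finsetProd (u := s) (x := ξ) fun i _ =>
    (hasDerivAt_mul_const (b i)).const_add (a i)

theorem hasDerivAt_sum_prod_erase_affine (s : Finset ι) (ξ : ℝ) :
    HasDerivAt (fun ξ => ∑ i ∈ s, (∏ k ∈ s.erase i, (a k + ξ * b k)) * b i)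
      (∑ i ∈ s, (∑ j ∈ s.erase i,
        (∏ k ∈ (s.erase i).erase j, (a k + ξ * b k)) * b j) * b i) ξ :=
  HasDerivAt.fun_sum fun i _ => (hasDerivAt_prod_affine a b (s.erase i) ξ).mul_const (b i)

end AffineProduct

theorem Finset.sum_powerset_insert_insert {ι β : Type*} [DecidableEq ι] [AddCommMonoid β]
    {s : Finset ι} {i j : ι} (hij : i ≠ j) (hi : i ∉ s) (hj : j ∉ s) (φ : Finset ι → β) :
    ∑ S ∈ (insert i (insert j s)).powerset, φ S =
      ∑ R ∈ s.powerset, (φ R + φ (insert i R) + φ (insert j R) + φ (insert i (insert j R))) := by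
  rw [sum_powerset_insert (by simp [hij, hi]), sum_powerset_insert hj, sum_powerset_insert hj]
  simp only [sum_add_distrib]
  abel

section MultilinearExtension

variable {Ω : Type*} [DecidableEq Ω]

def coordWeight (S : Finset Ω) (z : Ω → ℝ) (e : Ω) : ℝ :=
  if e ∈ S then z e else 1 - z e

def coordSlope (S : Finset Ω) (y : Ω → ℝ) (e : Ω) : ℝ :=
  if e ∈ S then y e else -y e

theorem mlext_eq_sum_prod_coordWeight [Fintype Ω] (f : Finset Ω → ℝ) (z : Ω → ℝ) :
    mlext f z = ∑ S, f S * ∏ e, coordWeight S z e := by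
  refine sum_congr rfl fun S _ => congrArg (f S * ·) ?_
  rw [← prod_mul_prod_compl S]
  congr 1
  · exact prod_congr rfl fun e he => (if_pos he).symm
  · exact prod_congr rfl fun e he => (if_neg (mem_compl.1 he)).symm

theorem coordWeight_add_mul (S : Finset Ω) (x y : Ω → ℝ) (ξ : ℝ) (e : Ω) :
    coordWeight S (fun e => x e + ξ * y e) e = coordWeight S x e + ξ * coordSlope S y e := by
  unfold coordWeight coordSlope
  split_ifs <;> ring

theorem coordWeight_nonneg (S : Finset Ω) {z : Ω → ℝ} {e : Ω} (hz : z e ∈ Set.Icc (0 : ℝ) 1) :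
    0 ≤ coordWeight S z e := by
  unfold coordWeight
  split_ifs <;> linarith [hz.1, hz.2]

theorem prod_coordWeight_insert_of_notMem {u : Finset Ω} {a : Ω} (ha : a ∉ u) (R : Finset Ω)
    (z : Ω → ℝ) : ∏ k ∈ u, coordWeight (insert a R) z k = ∏ k ∈ u, coordWeight R z k :=
  prod_congr rfl fun k hk => by simp [coordWeight, ne_of_mem_of_not_mem hk ha]

theorem submodular_insert_insert {f : Finset Ω → ℝ}
    (hsub : ∀ S T : Finset Ω, f (S ∪ T) + f (S ∩ T) ≤ f S + f T)
    {i j : Ω} (hij : i ≠ j) (R : Finset Ω) :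
    f (insert i (insert j R)) + f R ≤ f (insert i R) + f (insert j R) := by
  have hunion : insert i R ∪ insert j R = insert i (insert j R) := by
    ext; simp only [mem_union, mem_insert]; tauto
  have hinter : insert i R ∩ insert j R = R := by
    ext k; simp only [mem_inter, mem_insert]
    constructor
    · rintro ⟨rfl | h, rfl | h'⟩ <;> first | exact absurd rfl hij | assumption
    · exact fun h => ⟨Or.inr h, Or.inr h⟩
  simpa [hunion, hinter] using hsub (insert i R) (insert j R)

-- The left-hand side is `yᵢ yⱼ ∂²F/∂zᵢ∂zⱼ (z)` for the multilinear extension `F = mlext f`.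
theorem sum_mul_prod_coordWeight_mul_coordSlope_nonpos [Fintype Ω] {f : Finset Ω → ℝ}
    (hsub : ∀ S T : Finset Ω, f (S ∪ T) + f (S ∩ T) ≤ f S + f T)
    {i j : Ω} (hij : i ≠ j) {y : Ω → ℝ} (hy : ∀ e, 0 ≤ y e)
    {z : Ω → ℝ} (hz : ∀ e, z e ∈ Set.Icc (0 : ℝ) 1) :
    ∑ S, f S * ((∏ k ∈ (univ.erase i).erase j, coordWeight S z k) *
      coordSlope S y j * coordSlope S y i) ≤ 0 := by
  set u := (univ.erase i).erase j
  have hju : j ∉ u := notMem_erase j _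
  have hiu : i ∉ u := fun h => notMem_erase i _ (mem_of_mem_erase h)
  have huniv : insert i (insert j u) = univ := by
    rw [insert_erase (mem_erase.2 ⟨hij.symm, mem_univ j⟩), insert_erase (mem_univ i)]
  rw [← powerset_univ, ← huniv, sum_powerset_insert_insert hij hiu hju]
  refine sum_nonpos fun R hR => ?_
  have hiR : i ∉ R := fun h => hiu (mem_powerset.1 hR h)
  have hjR : j ∉ R := fun h => hju (mem_powerset.1 hR h)
  simp only [prod_coordWeight_insert_of_notMem hiu, prod_coordWeight_insert_of_notMem hju]
  have hP : 0 ≤ ∏ k ∈ u, coordWeight R z k := prod_nonneg fun k _ => coordWeight_nonneg R (hz k)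
  calc _ = (f (insert i (insert j R)) + f R - f (insert i R) - f (insert j R)) *
          ((∏ k ∈ u, coordWeight R z k) * (y j * y i)) := by
        simp only [coordSlope, mem_insert, hiR, hjR, hij, hij.symm, or_false, or_true, if_true,
          if_false]
        ring
    _ ≤ 0 := mul_nonpos_of_nonpos_of_nonneg (by linarith [submodular_insert_insert hsub hij R])
        (mul_nonneg hP (mul_nonneg (hy j) (hy i)))

end MultilinearExtension

theorem stmt_1_general {Ω : Type*} [Fintype Ω] [DecidableEq Ω] (f : Finset Ω → ℝ)
    (hsub : ∀ S T : Finset Ω, f (S ∪ T) + f (S ∩ T) ≤ f S + f T)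
    (x y : Ω → ℝ) (hy : ∀ e, 0 ≤ y e) :
    ConcaveOn ℝ {ξ : ℝ | ∀ e, x e + ξ * y e ∈ Set.Icc (0:ℝ) 1}
      (fun ξ => mlext f (fun e => x e + ξ * y e)) := by
  have hconv : Convex ℝ {ξ : ℝ | ∀ e, x e + ξ * y e ∈ Set.Icc (0:ℝ) 1} := by
    intro ξ₁ h₁ ξ₂ h₂ s t hs ht hst e
    convert convex_Icc (0 : ℝ) 1 (h₁ e) (h₂ e) hs ht hst using 1
    simp only [smul_eq_mul]
    linear_combination x e * hst.symm
  have hline : (fun ξ => mlext f (fun e => x e + ξ * y e)) =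
      fun ξ => ∑ S, f S * ∏ e, (coordWeight S x e + ξ * coordSlope S y e) := by
    funext ξ
    simp only [mlext_eq_sum_prod_coordWeight, coordWeight_add_mul]
  have hF' (ξ : ℝ) := HasDerivAt.fun_sum (u := univ) fun S _ =>
    (hasDerivAt_prod_affine (coordWeight S x) (coordSlope S y) univ ξ).const_mul (f S)
  have hF'' (ξ : ℝ) := HasDerivAt.fun_sum (u := univ) fun S _ =>
    (hasDerivAt_sum_prod_erase_affine (coordWeight S x) (coordSlope S y) univ ξ).const_mul (f S)
  rw [hline]
  refine concaveOn_of_hasDerivWithinAt2_nonpos hconv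
    (fun ξ _ => (hF' ξ).continuousAt.continuousWithinAt) (fun ξ _ => (hF' ξ).hasDerivWithinAt)
    (fun ξ _ => (hF'' ξ).hasDerivWithinAt) fun ξ hξ => ?_
  simp only [← coordWeight_add_mul, mul_sum, sum_mul]
  rw [sum_comm]
  refine sum_nonpos fun i _ => ?_
  rw [sum_comm]
  exact sum_nonpos fun j hj => sum_mul_prod_coordWeight_mul_coordSlope_nonpos hsub
    (ne_of_mem_erase hj).symm hy (interior_subset hξ)

theorem stmt_1 {Ω : Type*} [Fintype Ω] [DecidableEq Ω] (f : Finset Ω → ℝ)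
    (hnonneg : ∀ S, 0 ≤ f S)
    (hmono : ∀ S T : Finset Ω, S ⊆ T → f S ≤ f T)
    (hsub : ∀ S T : Finset Ω, f (S ∪ T) + f (S ∩ T) ≤ f S + f T)
    (x y : Ω → ℝ) (hy : ∀ e, 0 ≤ y e) :
    ConcaveOn ℝ {ξ : ℝ | ∀ e, x e + ξ * y e ∈ Set.Icc (0:ℝ) 1}
      (fun ξ => mlext f (fun e => x e + ξ * y e)) :=
  stmt_1_general f hsub x y hy
end

section
/- Let f : 2^Ω → ℝ≥0 be monotone and submodular with multilinear extension F. For any x, y ∈ [0,1]^Ω with y ≥ x coordinatewise and letting v = y − x (so x + v ∈ [0,1]^Ω), we have v · ∇F(x) ≥ F(y) − F(x), where ∇F(x) is the gradient of F at x. -/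
open Finset

section Aux

variable {Ω : Type*} [Fintype Ω] [DecidableEq Ω]

noncomputable def pS (z : Ω → ℝ) (S : Finset Ω) : ℝ :=
  (∏ e ∈ S, z e) * ∏ e ∈ Sᶜ, (1 - z e)

noncomputable def qS (z : Ω → ℝ) (a : Ω) (S : Finset Ω) : ℝ :=
  (∏ e ∈ S, z e) * ∏ e ∈ (insert a S)ᶜ, (1 - z e)

noncomputable def D (g : Finset Ω → ℝ) (a : Ω) (z : Ω → ℝ) : ℝ :=
  ∑ S ∈ ((univ : Finset Ω).erase a).powerset, qS z a S * (g (insert a S) - g S)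

lemma sum_pair (a : Ω) (F : Finset Ω → ℝ) :
    ∑ S : Finset Ω, F S
      = ∑ S ∈ ((univ : Finset Ω).erase a).powerset, (F S + F (insert a S)) := by
  have h1 : (univ : Finset (Finset Ω)) = ((univ : Finset Ω)).powerset :=
    (Finset.powerset_univ).symm
  have h2 : (univ : Finset Ω) = insert a ((univ : Finset Ω).erase a) :=
    (Finset.insert_erase (mem_univ a)).symm
  rw [show (∑ S : Finset Ω, F S) = ∑ S ∈ (univ : Finset (Finset Ω)), F S from rfl, h1]
  conv_lhs => rw [h2]
  rw [Finset.sum_powerset_insert (Finset.notMem_erase a _), ← Finset.sum_add_distrib]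

lemma mem_pow (a : Ω) {S : Finset Ω} (hS : S ∈ ((univ : Finset Ω).erase a).powerset) :
    a ∉ S := fun h => Finset.notMem_erase a _ (Finset.mem_powerset.mp hS h)

lemma pS_notMem {z : Ω → ℝ} {a : Ω} {S : Finset Ω} (ha : a ∉ S) :
    pS z S = (1 - z a) * qS z a S := by
  have haC : a ∈ Sᶜ := Finset.mem_compl.mpr ha
  rw [pS, qS, ← Finset.mul_prod_erase _ _ haC, Finset.compl_insert]
  ring

lemma pS_insert {z : Ω → ℝ} {a : Ω} {S : Finset Ω} (ha : a ∉ S) :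
    pS z (insert a S) = z a * qS z a S := by
  rw [pS, qS, Finset.prod_insert ha]
  ring

lemma qS_update {z : Ω → ℝ} {a : Ω} {t : ℝ} {S : Finset Ω} (ha : a ∉ S) :
    qS (Function.update z a t) a S = qS z a S := by
  have h1 : ∀ e ∈ S, Function.update z a t e = z e := fun e he =>
    Function.update_of_ne (ne_of_mem_of_not_mem he ha) _ _
  have h2 : ∀ e ∈ (insert a S)ᶜ, (1 - Function.update z a t e) = (1 - z e) := by
    intro e he
    have : e ≠ a := fun h => (Finset.mem_compl.mp he) (h ▸ Finset.mem_insert_self a S)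
    rw [Function.update_of_ne this]
  rw [qS, qS, Finset.prod_congr rfl h1, Finset.prod_congr rfl h2]

lemma qS_nonneg {z : Ω → ℝ} (hz : ∀ e, z e ∈ Set.Icc (0:ℝ) 1) (a : Ω) (S : Finset Ω) :
    0 ≤ qS z a S :=
  mul_nonneg (Finset.prod_nonneg fun e _ => (hz e).1)
    (Finset.prod_nonneg fun e _ => by linarith [(hz e).2])

lemma mlext_eq (g : Finset Ω → ℝ) (z : Ω → ℝ) :
    mlext g z = ∑ S : Finset Ω, g S * pS z S := rfl

lemma mlext_split (g : Finset Ω → ℝ) (z : Ω → ℝ) (a : Ω) :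
    mlext g z = ∑ S ∈ ((univ : Finset Ω).erase a).powerset,
      qS z a S * ((1 - z a) * g S + z a * g (insert a S)) := by
  rw [mlext_eq, sum_pair a]
  refine Finset.sum_congr rfl fun S hS => ?_
  have ha := mem_pow a hS
  rw [pS_notMem ha, pS_insert ha]
  ring

lemma mslope (g : Finset Ω → ℝ) (z : Ω → ℝ) (a : Ω) (t : ℝ) :
    mlext g (Function.update z a t) = mlext g z + (t - z a) * D g a z := by
  rw [mlext_split g (Function.update z a t) a, mlext_split g z a, D, Finset.mul_sum,
    ← Finset.sum_add_distrib]
  refine Finset.sum_congr rfl fun S hS => ?_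
  have ha := mem_pow a hS
  rw [qS_update ha, Function.update_self]
  ring

lemma grad_eq (g : Finset Ω → ℝ) (z : Ω → ℝ) (a : Ω) :
    ∑ S : Finset Ω, pS z S * (g (insert a S) - g (S.erase a)) = D g a z := by
  rw [sum_pair a, D]
  refine Finset.sum_congr rfl fun S hS => ?_
  have ha := mem_pow a hS
  rw [Finset.erase_eq_of_notMem ha, Finset.insert_idem, Finset.erase_insert ha,
    pS_notMem ha, pS_insert ha]
  ring

noncomputable def ga (f : Finset Ω → ℝ) (a : Ω) (S : Finset Ω) : ℝ :=
  f (insert a S) - f (S.erase a)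

lemma mlext_ga_eq_D (f : Finset Ω → ℝ) (z : Ω → ℝ) (a : Ω) :
    mlext (ga f a) z = D f a z := by
  rw [← grad_eq f z a, mlext_eq]
  exact Finset.sum_congr rfl fun S _ => mul_comm _ _

lemma D_nonpos {g : Finset Ω → ℝ} {a : Ω} {z : Ω → ℝ}
    (hz : ∀ e, z e ∈ Set.Icc (0:ℝ) 1)
    (hg : ∀ S : Finset Ω, g (insert a S) ≤ g S) : D g a z ≤ 0 :=
  Finset.sum_nonpos fun S _ =>
    mul_nonpos_of_nonneg_of_nonpos (qS_nonneg hz a S) (by linarith [hg S])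

lemma insert_erase' (a : Ω) (S : Finset Ω) : insert a (S.erase a) = insert a S := by
  ext x
  simp only [Finset.mem_insert, Finset.mem_erase]
  constructor
  · rintro (h | ⟨_, h⟩)
    exacts [Or.inl h, Or.inr h]
  · rintro (h | h)
    · exact Or.inl h
    · by_cases hx : x = a
      · exact Or.inl hx
      · exact Or.inr ⟨hx, h⟩

lemma ga_anti {f : Finset Ω → ℝ}
    (hsub : ∀ S T : Finset Ω, f (S ∪ T) + f (S ∩ T) ≤ f S + f T)
    (a : Ω) {S T : Finset Ω} (hST : S ⊆ T) : ga f a T ≤ ga f a S := by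
  have h1 : S.erase a ⊆ T.erase a := Finset.erase_subset_erase a hST
  have key := hsub (insert a (S.erase a)) (T.erase a)
  have hu : insert a (S.erase a) ∪ T.erase a = insert a (T.erase a) := by
    rw [Finset.insert_union, Finset.union_eq_right.mpr h1]
  have hi : insert a (S.erase a) ∩ T.erase a = S.erase a := by
    rw [Finset.insert_inter_of_notMem (Finset.notMem_erase a T),
      Finset.inter_eq_left.mpr h1]
  rw [hu, hi, insert_erase' a S, insert_erase' a T] at key
  unfold ga
  linarith

lemma piecewise_mem {z w : Ω → ℝ} (hz : ∀ e, z e ∈ Set.Icc (0:ℝ) 1)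
    (hw : ∀ e, w e ∈ Set.Icc (0:ℝ) 1) (A : Finset Ω) (e : Ω) :
    A.piecewise w z e ∈ Set.Icc (0:ℝ) 1 := by
  by_cases h : e ∈ A
  · rw [Finset.piecewise_eq_of_mem _ _ _ h]; exact hw e
  · rw [Finset.piecewise_eq_of_notMem _ _ _ h]; exact hz e

lemma mlext_ga_mono {f : Finset Ω → ℝ}
    (hsub : ∀ S T : Finset Ω, f (S ∪ T) + f (S ∩ T) ≤ f S + f T)
    (a : Ω) {z w : Ω → ℝ}
    (hz : ∀ e, z e ∈ Set.Icc (0:ℝ) 1) (hw : ∀ e, w e ∈ Set.Icc (0:ℝ) 1)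
    (hzw : ∀ e, z e ≤ w e) (A : Finset Ω) :
    mlext (ga f a) (A.piecewise w z) ≤ mlext (ga f a) z := by
  induction A using Finset.induction_on with
  | empty => rw [Finset.piecewise_empty]
  | @insert b A hb ih =>
    rw [Finset.piecewise_insert, mslope (ga f a) _ b (w b)]
    have hζ := piecewise_mem hz hw A
    have hD : D (ga f a) b (A.piecewise w z) ≤ 0 :=
      D_nonpos hζ fun S => ga_anti hsub a (Finset.subset_insert b S)
    have hb' : A.piecewise w z b = z b := Finset.piecewise_eq_of_notMem _ _ _ hb
    have h1 : (w b - A.piecewise w z b) * D (ga f a) b (A.piecewise w z) ≤ 0 := by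
      refine mul_nonpos_of_nonneg_of_nonpos ?_ hD
      rw [hb']
      linarith [hzw b]
    linarith

lemma main_ind {f : Finset Ω → ℝ}
    (hsub : ∀ S T : Finset Ω, f (S ∪ T) + f (S ∩ T) ≤ f S + f T)
    {x y : Ω → ℝ}
    (hx : ∀ e, x e ∈ Set.Icc (0:ℝ) 1) (hy : ∀ e, y e ∈ Set.Icc (0:ℝ) 1)
    (hxy : ∀ e, x e ≤ y e) (A : Finset Ω) :
    mlext f (A.piecewise y x) ≤ mlext f x + ∑ e ∈ A, (y e - x e) * mlext (ga f e) x := by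
  induction A using Finset.induction_on with
  | empty => rw [Finset.piecewise_empty]; simp
  | @insert b A hb ih =>
    rw [Finset.piecewise_insert, mslope f _ b (y b), Finset.sum_insert hb]
    have hb' : A.piecewise y x b = x b := Finset.piecewise_eq_of_notMem _ _ _ hb
    have hDm : D f b (A.piecewise y x) ≤ mlext (ga f b) x := by
      rw [← mlext_ga_eq_D]
      exact mlext_ga_mono hsub b hx hy hxy A
    have h1 : (y b - x b) * D f b (A.piecewise y x) ≤ (y b - x b) * mlext (ga f b) x :=
      mul_le_mul_of_nonneg_left hDm (by linarith [hxy b])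
    rw [hb']
    linarith

end Aux

theorem stmt_7 {Ω : Type*} [Fintype Ω] [DecidableEq Ω] (f : Finset Ω → ℝ)
    (hnonneg : ∀ S, 0 ≤ f S)
    (hmono : ∀ S T : Finset Ω, S ⊆ T → f S ≤ f T)
    (hsub : ∀ S T : Finset Ω, f (S ∪ T) + f (S ∩ T) ≤ f S + f T)
    (x y : Ω → ℝ)
    (hx : ∀ e, x e ∈ Set.Icc (0:ℝ) 1) (hy : ∀ e, y e ∈ Set.Icc (0:ℝ) 1)
    (hxy : ∀ e, x e ≤ y e) :
    ∑ e : Ω, (y e - x e) *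
        (∑ S : Finset Ω, ((∏ e' ∈ S, x e') * ∏ e' ∈ Sᶜ, (1 - x e')) *
          (f (insert e S) - f (S.erase e)))
      ≥ mlext f y - mlext f x := by
  have h := main_ind hsub hx hy hxy (univ : Finset Ω)
  rw [Finset.piecewise_univ] at h
  have hconv : ∀ e : Ω,
      (∑ S : Finset Ω, ((∏ e' ∈ S, x e') * ∏ e' ∈ Sᶜ, (1 - x e')) *
        (f (insert e S) - f (S.erase e))) = mlext (ga f e) x := by
    intro e
    rw [mlext_ga_eq_D, ← grad_eq f x e]
    exact Finset.sum_congr rfl fun _ _ => rfl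
  have hsum : ∑ e : Ω, (y e - x e) *
      (∑ S : Finset Ω, ((∏ e' ∈ S, x e') * ∏ e' ∈ Sᶜ, (1 - x e')) *
        (f (insert e S) - f (S.erase e)))
      = ∑ e : Ω, (y e - x e) * mlext (ga f e) x :=
    Finset.sum_congr rfl fun e _ => by rw [hconv e]
  rw [ge_iff_le, hsum]
  linarith
end

section
/- Suppose g : [0,1] → ℝ is differentiable and satisfies g'(t) ≥ OPT − g(t) for all t ∈ [0,1], where OPT ≥ 0 is a constant and g(0) ≥ 0. Then g(1) ≥ (1 − 1/e) · OPT. -/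
/-!
The gap `OPT - g` satisfies `(OPT - g)' ≤ -(OPT - g)`, so by Grönwall's inequality it decays at
least like `e^{-t}`. As the initial gap `OPT - g 0` is at most `OPT`, the final gap is at most
`OPT / e`.
-/

open Set Real

theorem sub_le_mul_exp_neg_of_deriv_ge {f f' : ℝ → ℝ} {a b c : ℝ}
    (hf : ContinuousOn f (Icc a b))
    (hf' : ∀ x ∈ Ico a b, HasDerivWithinAt f (f' x) (Ici x) x)
    (hbound : ∀ x ∈ Ico a b, c - f x ≤ f' x) :
    ∀ x ∈ Icc a b, c - f x ≤ (c - f a) * exp (-(x - a)) := by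
  intro x hx
  have hgap := le_gronwallBound_of_liminf_deriv_right_le (f := fun y => c - f y)
    (f' := fun y => -f' y) (δ := c - f a) (K := -1) (ε := 0)
    (continuousOn_const.sub hf)
    (fun y hy r hr => by
      simpa [slope_def_field, div_eq_inv_mul] using ((hf' y hy).const_sub c).liminf_right_slope_le hr)
    le_rfl (fun y hy => by linarith [hbound y hy]) x hx
  simpa [gronwallBound_ε0] using hgap

theorem stmt_8_general (g g' : ℝ → ℝ) (OPT : ℝ) (hg0 : 0 ≤ g 0)
    (hderiv : ∀ t ∈ Set.Icc (0:ℝ) 1, HasDerivAt g (g' t) t)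
    (hineq : ∀ t ∈ Set.Icc (0:ℝ) 1, g' t ≥ OPT - g t) :
    g 1 ≥ (1 - 1 / Real.exp 1) * OPT := by
  have hgap : OPT - g 1 ≤ (OPT - g 0) * exp (-1) := by
    simpa using sub_le_mul_exp_neg_of_deriv_ge
      (fun t ht => (hderiv t ht).continuousAt.continuousWithinAt)
      (fun t ht => (hderiv t (Ico_subset_Icc_self ht)).hasDerivWithinAt)
      (fun t ht => hineq t (Ico_subset_Icc_self ht)) 1 (right_mem_Icc.2 zero_le_one)
  have hdecay : (OPT - g 0) * exp (-1) ≤ OPT * exp (-1) := by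
    gcongr
    linarith
  rw [one_div, ← exp_neg]
  linarith

theorem stmt_8 (g g' : ℝ → ℝ) (OPT : ℝ) (hOPT : 0 ≤ OPT) (hg0 : 0 ≤ g 0)
    (hderiv : ∀ t ∈ Set.Icc (0:ℝ) 1, HasDerivAt g (g' t) t)
    (hineq : ∀ t ∈ Set.Icc (0:ℝ) 1, g' t ≥ OPT - g t) :
    g 1 ≥ (1 - 1 / Real.exp 1) * OPT :=
  stmt_8_general g g' OPT hg0 hderiv hineq
end
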